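/- In the setting where Ω = τ² X^⊤ X is positive definite, Q = [X_E^⊤ X_E; X_{E^c}^⊤ X_E], Θ = (Q^⊤ Ω^{-1} Q)^{-1}, c^j = X_E (X_E^⊤ X_E)^{-1} e_j, P = −X^⊤ (full), and r^j = Q^⊤ Ω^{-1} P c^j / ‖c^j‖², the vector r^j equals −(1/(τ² ‖c^j‖²)) e_j; consequently (r^j)^⊤ Θ r^j = 1/(τ² ‖c^j‖²). -/

import Mathlib

open Matrix

/-- In the randomized LASSO with data-carving randomization `Ω = τ²X^⊤X`, with
`c^j = X_E (X_E^⊤X_E)⁻¹ e_j`, `P = -X^⊤` and `r^j = Q^⊤Ω⁻¹P c^j / ‖c^j‖²`, one has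
`r^j = -(1/(τ²‖c^j‖²)) e_j` and `(r^j)^⊤ Θ r^j = 1/(τ²‖c^j‖²)`. -/
theorem stmt_12 {n dE dC : ℕ} (τ : ℝ) (hτ : 0 < τ)
    (X : Matrix (Fin n) (Fin dE ⊕ Fin dC) ℝ)
    (XE : Matrix (Fin n) (Fin dE) ℝ) (hXE : XE = X.submatrix id Sum.inl)
    (hX : (Xᵀ * X).PosDef)
    (hE : (XEᵀ * XE).PosDef)
    (Ω : Matrix (Fin dE ⊕ Fin dC) (Fin dE ⊕ Fin dC) ℝ) (hΩ : Ω = (τ ^ 2) • (Xᵀ * X))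
    (Q : Matrix (Fin dE ⊕ Fin dC) (Fin dE) ℝ) (hQ : Q = Xᵀ * XE)
    (Θ : Matrix (Fin dE) (Fin dE) ℝ) (hΘ : Θ = (Qᵀ * Ω⁻¹ * Q)⁻¹)
    (P : Matrix (Fin dE ⊕ Fin dC) (Fin n) ℝ) (hP : P = -Xᵀ)
    (j : Fin dE)
    (c : Fin n → ℝ) (hc : c = XE *ᵥ ((XEᵀ * XE)⁻¹ *ᵥ Pi.single j 1))
    (r : Fin dE → ℝ) (hr : r = (c ⬝ᵥ c)⁻¹ • (Qᵀ *ᵥ (Ω⁻¹ *ᵥ (P *ᵥ c)))) :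
    r = (-(1 / (τ ^ 2 * (c ⬝ᵥ c)))) • (Pi.single j 1 : Fin dE → ℝ) ∧
      r ⬝ᵥ Θ *ᵥ r = 1 / (τ ^ 2 * (c ⬝ᵥ c)) := by
  have hτ2 : (τ : ℝ) ^ 2 ≠ 0 := pow_ne_zero 2 hτ.ne'
  have hNdet : IsUnit (Xᵀ * X).det := isUnit_iff_ne_zero.2 hX.det_pos.ne'
  have hGdet : IsUnit (XEᵀ * XE).det := isUnit_iff_ne_zero.2 hE.det_pos.ne'
  -- the inclusion matrix J with X * J = XE
  set J : Matrix (Fin dE ⊕ Fin dC) (Fin dE) ℝ :=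
    Matrix.of (fun s k => if s = Sum.inl k then 1 else 0) with hJ
  have hXJ : X * J = XE := by
    subst hXE
    ext i k
    simp [hJ, Matrix.mul_apply]
  have hXtXE : Xᵀ * XE = (Xᵀ * X) * J := by rw [← hXJ, Matrix.mul_assoc]
  have hXEt : XEᵀ = Jᵀ * Xᵀ := by rw [← hXJ, Matrix.transpose_mul]
  have hΩinv : Ω⁻¹ = (τ ^ 2)⁻¹ • (Xᵀ * X)⁻¹ := by
    apply Matrix.inv_eq_right_inv
    rw [hΩ, Matrix.smul_mul, Matrix.mul_smul, smul_smul,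
      Matrix.mul_nonsing_inv _ hNdet, mul_inv_cancel₀ hτ2, one_smul]
  have hQt : Qᵀ = Jᵀ * (Xᵀ * X) := by
    rw [hQ, hXtXE, Matrix.transpose_mul, Matrix.transpose_mul,
      Matrix.transpose_transpose]
  -- key matrix identities
  have key1 : Qᵀ * Ω⁻¹ * P = (-(τ ^ 2)⁻¹) • XEᵀ := by
    rw [hQt, hΩinv, hP, hXEt]
    rw [Matrix.mul_smul, Matrix.smul_mul, Matrix.mul_neg]
    rw [Matrix.mul_assoc Jᵀ, Matrix.mul_nonsing_inv _ hNdet, Matrix.mul_one]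
    simp [neg_smul]
  have key2 : Qᵀ * Ω⁻¹ * Q = (τ ^ 2)⁻¹ • (XEᵀ * XE) := by
    rw [hQt, hΩinv, hQ, hXtXE, hXEt]
    rw [Matrix.mul_smul, Matrix.smul_mul]
    rw [Matrix.mul_assoc Jᵀ, Matrix.mul_nonsing_inv _ hNdet, Matrix.mul_one]
    congr 1
    rw [Matrix.mul_assoc, hXJ, ← Matrix.mul_assoc]
  have hΘ' : Θ = (τ ^ 2) • (XEᵀ * XE)⁻¹ := by
    rw [hΘ, key2]
    apply Matrix.inv_eq_right_inv
    rw [Matrix.smul_mul, Matrix.mul_smul, smul_smul,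
      Matrix.mul_nonsing_inv _ hGdet, inv_mul_cancel₀ hτ2, one_smul]
  -- vectors
  set e : Fin dE → ℝ := Pi.single j 1 with he
  set v : Fin dE → ℝ := (XEᵀ * XE)⁻¹ *ᵥ e with hv
  have hGv : (XEᵀ * XE) *ᵥ v = e := by
    rw [hv, Matrix.mulVec_mulVec, Matrix.mul_nonsing_inv _ hGdet, Matrix.one_mulVec]
  have hcv : c = XE *ᵥ v := hc
  have hXEtc : XEᵀ *ᵥ c = e := by
    rw [hcv, Matrix.mulVec_mulVec, hGv]
  have hs : c ⬝ᵥ c = v j := by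
    conv_lhs => rw [hcv, Matrix.dotProduct_mulVec, ← Matrix.mulVec_transpose, ← hcv, hXEtc]
    simp [he, single_dotProduct]
  have hspos : 0 < c ⬝ᵥ c := by
    have hv0 : v ≠ 0 := by
      intro h
      have h2 : e = 0 := by rw [← hGv, h, Matrix.mulVec_zero]
      have h3 : e j = 0 := by rw [h2]; rfl
      rw [he, Pi.single_eq_same] at h3
      exact one_ne_zero h3
    have := hE.dotProduct_mulVec_pos hv0
    have hcc : c ⬝ᵥ c = v ⬝ᵥ (XEᵀ * XE) *ᵥ v := by
      rw [hGv, hs, dotProduct_comm]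
      simp [he, single_dotProduct]
    rw [hcc]
    simpa using this
  set s : ℝ := c ⬝ᵥ c with hsdef
  have hsne : s ≠ 0 := hspos.ne'
  have hr1 : r = (-(1 / (τ ^ 2 * s))) • e := by
    rw [hr, Matrix.mulVec_mulVec, Matrix.mulVec_mulVec, key1]
    rw [Matrix.smul_mulVec, hXEtc, smul_smul]
    congr 1
    field_simp
  refine ⟨hr1, ?_⟩
  have hΘe : Θ *ᵥ e = (τ ^ 2) • v := by
    rw [hΘ', Matrix.smul_mulVec, hv]
  rw [hr1, Matrix.mulVec_smul, hΘe, smul_dotProduct, dotProduct_smul,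
    dotProduct_smul]
  have : e ⬝ᵥ v = s := by
    rw [hs]
    simp [he, single_dotProduct]
  rw [this]
  field_simp
  simp only [smul_eq_mul]
  field_simp
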